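/- For ε > 0, the solution u(x) = sinh(x/ε)/sinh(1/ε) of -ε²u''+u=0, u(0)=0, u(1)=1 satisfies the layer estimate 0 ≤ u(x) ≤ e^{-(1-x)/ε} for all x ∈ [0,1]. -/
import Mathlib


theorem layer_estimate (ε : ℝ) (hε : 0 < ε) :
    ∀ x ∈ Set.Icc (0 : ℝ) 1,
      0 ≤ Real.sinh (x / ε) / Real.sinh (1 / ε) ∧
      Real.sinh (x / ε) / Real.sinh (1 / ε) ≤ Real.exp (-(1 - x) / ε) := by
  intro x hx
  obtain ⟨hx0, hx1⟩ := hx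
  have hb : 0 < Real.sinh (1 / ε) := Real.sinh_pos_iff.2 (by positivity)
  constructor
  · exact div_nonneg (by simpa using Real.sinh_nonneg_iff.2 (by positivity)) hb.le
  · rw [div_le_iff₀ hb, Real.sinh_eq, Real.sinh_eq]
    have h1 : Real.exp (-(1 - x) / ε) * Real.exp (1 / ε) = Real.exp (x / ε) := by
      rw [← Real.exp_add]; ring_nf
    have h2 : Real.exp (-(1 - x) / ε) * Real.exp (-(1 / ε)) = Real.exp ((x - 2) / ε) := by
      rw [← Real.exp_add]; ring_nf
    have h3 : Real.exp ((x - 2) / ε) ≤ Real.exp (-(x / ε)) := by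
      apply Real.exp_le_exp.2
      rw [show -(x / ε) = (-x) / ε by ring]
      gcongr
      linarith
    nlinarith [Real.exp_pos (x / ε)]
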